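/- The number of indecomposable permutations with exactly k inversions avoiding both 123 and 132 equals the number of 'almost triangular' partitions of k, i.e., sequences ρ₁ ≤ ρ₂ ≤ … ≤ ρ_r with each ρ_i ∈ {i−1, i} summing to k, not all equal to i−1 (in particular with ρ_r = r allowed to determine r uniquely). This count is the binomial coefficient C(r, k − r(r−1)/2), where r is the unique integer with r(r−1)/2 < k ≤ r(r+1)/2 (and the count is 1 for k = 0). -/

import Mathlib

def inversions {n : ℕ} (π : Equiv.Perm (Fin n)) : ℕ :=
  (Finset.univ.filter fun p : Fin n × Fin n => p.1 < p.2 ∧ π p.2 < π p.1).card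

def Decomposable {n : ℕ} (π : Equiv.Perm (Fin n)) : Prop :=
  ∃ j : ℕ, 0 < j ∧ j < n ∧ ∀ i : Fin n, (i : ℕ) < j → (π i : ℕ) < j

def Indecomposable {n : ℕ} (π : Equiv.Perm (Fin n)) : Prop :=
  0 < n ∧ ¬ Decomposable π

def invTable {n : ℕ} (π : Equiv.Perm (Fin n)) (i : Fin n) : ℕ :=
  (Finset.univ.filter fun j : Fin n => i < j ∧ π j < π i).card

def Avoids123 {n : ℕ} (π : Equiv.Perm (Fin n)) : Prop :=
  ¬ ∃ i j k : Fin n, i < j ∧ j < k ∧ π i < π j ∧ π j < π k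

def Avoids132 {n : ℕ} (π : Equiv.Perm (Fin n)) : Prop :=
  ¬ ∃ i j k : Fin n, i < j ∧ j < k ∧ π i < π k ∧ π k < π j

def Avoids213 {n : ℕ} (π : Equiv.Perm (Fin n)) : Prop :=
  ¬ ∃ i j k : Fin n, i < j ∧ j < k ∧ π j < π i ∧ π i < π k

def Avoids231 {n : ℕ} (π : Equiv.Perm (Fin n)) : Prop :=
  ¬ ∃ i j k : Fin n, i < j ∧ j < k ∧ π k < π i ∧ π i < π j

def Avoids312 {n : ℕ} (π : Equiv.Perm (Fin n)) : Prop :=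
  ¬ ∃ i j k : Fin n, i < j ∧ j < k ∧ π j < π k ∧ π k < π i

def Avoids321 {n : ℕ} (π : Equiv.Perm (Fin n)) : Prop :=
  ¬ ∃ i j k : Fin n, i < j ∧ j < k ∧ π k < π j ∧ π j < π i

def LTRMax {n : ℕ} (π : Equiv.Perm (Fin n)) (k : Fin n) : Prop :=
  ∀ i : Fin n, i < k → π i < π k

def revComp {n : ℕ} (π : Equiv.Perm (Fin n)) : Equiv.Perm (Fin n) :=
  Fin.revPerm * π * Fin.revPerm

/-- Almost triangular partitions of `k`, written as a weakly increasing list whose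
0-indexed `p`-th entry is `p` or `p + 1` (1-indexed: `ρᵢ ∈ {i-1, i}`), summing to
`k`, and (when nonempty) not all entries equal to `p` (1-indexed `i - 1`). -/
def AlmostTriangular (k : ℕ) (l : List ℕ) : Prop :=
  (∀ p, p < l.length → l.getD p 0 = p ∨ l.getD p 0 = p + 1) ∧
  (l ≠ [] → ∃ p, p < l.length ∧ l.getD p 0 = p + 1) ∧
  l.sum = k

/-- The number of indecomposable permutations with exactly `k` inversions avoiding
both 123 and 132. -/
noncomputable def I123132 (k : ℕ) : ℕ :=
  Nat.card {p : Σ n : ℕ, Equiv.Perm (Fin n) //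
    Indecomposable p.2 ∧ inversions p.2 = k ∧ Avoids123 p.2 ∧ Avoids132 p.2}

/-!
A permutation avoids 123 and 132 iff every entry has at most one larger entry to its right, i.e.
iff its inversion table `c` (the Lehmer code) has `c i ∈ {n - 2 - i, n - 1 - i}` for
`i < n - 1`. Such a permutation of length `n ≥ 2` is decomposable iff it ends with its maximum,
i.e. iff `c i = n - 2 - i` for all `i < n - 1`. Since the Lehmer code is a bijection onto the
sequences with `c i < n - i`, reading `c` backwards identifies the indecomposable ones with `k`
inversions with the almost triangular partitions of `k`. Such a partition of length `r` is
determined by the nonempty set of `i` with `ρᵢ = i`, whose size `k - r(r-1)/2 ∈ (0, r]` forces `r`.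
-/

open Finset Equiv

section LehmerCode

variable {n : ℕ}

lemma inversions_eq_sum_invTable (π : Perm (Fin n)) : inversions π = ∑ i, invTable π i := by
  simp only [inversions, invTable, card_filter, Fintype.sum_prod_type]

lemma invTable_add_card_filter_lt (π : Perm (Fin n)) (i : Fin n) :
    invTable π i + #{j | i < j ∧ π i < π j} = n - 1 - i := by
  rw [← Fin.card_Ioi, ← card_filter_add_card_filter_not (s := Ioi i) (fun j => π j < π i),
    invTable]
  congr 2 <;> ext j
  · simp
  · simp only [mem_filter, mem_univ, true_and, mem_Ioi, not_lt, and_congr_right_iff]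
    exact fun hij => (le_iff_lt_or_eq.trans (or_iff_left (π.injective.ne hij.ne))).symm

lemma invTable_add_lt (π : Perm (Fin n)) (i : Fin n) : invTable π i + i < n := by
  have := invTable_add_card_filter_lt π i
  omega

lemma invTable_last (π : Perm (Fin (n + 1))) : invTable π (Fin.last n) = 0 := by
  have := invTable_add_lt π (Fin.last n)
  rw [Fin.val_last] at this
  omega

lemma invTable_zero (π : Perm (Fin (n + 1))) : invTable π 0 = π 0 := by
  have hfilter : ({j | 0 < j ∧ π j < π 0} : Finset (Fin (n + 1))) =
      (Iio (π 0)).map π.symm.toEmbedding := by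
    ext j
    simp only [mem_filter, mem_univ, true_and, mem_map_equiv, symm_symm, mem_Iio,
      and_iff_right_iff_imp]
    exact fun h => Fin.pos_iff_ne_zero.2 (by rintro rfl; exact h.false)
  rw [invTable, hfilter, card_map, Fin.card_Iio]

def consPerm (p : Fin (n + 1)) (σ : Perm (Fin n)) : Perm (Fin (n + 1)) :=
  (finSuccEquiv n).trans ((optionCongr σ).trans (finSuccEquiv' p).symm)

@[simp] lemma consPerm_zero (p : Fin (n + 1)) (σ : Perm (Fin n)) : consPerm p σ 0 = p := by
  simp [consPerm]

@[simp] lemma consPerm_succ (p : Fin (n + 1)) (σ : Perm (Fin n)) (x : Fin n) :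
    consPerm p σ x.succ = p.succAbove (σ x) := by
  simp [consPerm]

lemma exists_consPerm_eq (π : Perm (Fin (n + 1))) : ∃ p σ, consPerm p σ = π := by
  have hinj : Function.Injective fun q : Fin (n + 1) × Perm (Fin n) => consPerm q.1 q.2 := by
    rintro ⟨p, σ⟩ ⟨p', σ'⟩ h
    have hp : p = p' := by simpa using congr($h 0)
    subst hp
    refine Prod.ext rfl (Equiv.ext fun x => p.succAbove_right_injective ?_)
    simpa using congr($h x.succ)
  have hcard : Fintype.card (Fin (n + 1) × Perm (Fin n)) = Fintype.card (Perm (Fin (n + 1))) := by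
    simp [Fintype.card_perm, Nat.factorial_succ]
  obtain ⟨⟨p, σ⟩, h⟩ := ((Fintype.bijective_iff_injective_and_card _).2 ⟨hinj, hcard⟩).2 π
  exact ⟨p, σ, h⟩

lemma invTable_consPerm_succ (p : Fin (n + 1)) (σ : Perm (Fin n)) (x : Fin n) :
    invTable (consPerm p σ) x.succ = invTable σ x := by
  simp only [invTable, card_filter, Fin.sum_univ_succ, consPerm_succ, Fin.succ_lt_succ_iff,
    Fin.succAbove_lt_succAbove_iff, Fin.not_lt_zero, false_and, if_false, zero_add]

theorem invTable_injective : Function.Injective (invTable : Perm (Fin n) → Fin n → ℕ) := by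
  induction n with
  | zero => exact fun _ _ _ => Subsingleton.elim _ _
  | succ n ih =>
    intro π π' h
    obtain ⟨p, σ, rfl⟩ := exists_consPerm_eq π
    obtain ⟨p', σ', rfl⟩ := exists_consPerm_eq π'
    have hp : p = p' := Fin.ext (by simpa [invTable_zero] using congr_fun h 0)
    have hσ : σ = σ' :=
      ih (funext fun x => by simpa [invTable_consPerm_succ] using congr_fun h x.succ)
    rw [hp, hσ]

theorem exists_invTable_eq (c : Fin n → ℕ) (hc : ∀ i, c i + i < n) : ∃ π, invTable π = c := by
  induction n with
  | zero => exact ⟨1, funext fun i => i.elim0⟩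
  | succ n ih =>
    obtain ⟨σ, hσ⟩ := ih (fun x => c x.succ) fun x => by
      have := hc x.succ
      rw [Fin.val_succ] at this
      omega
    refine ⟨consPerm ⟨c 0, by simpa using hc 0⟩ σ, funext fun i => ?_⟩
    cases i using Fin.cases with
    | zero => simp [invTable_zero]
    | succ x => simp [invTable_consPerm_succ, hσ]

end LehmerCode

section Avoidance

variable {n : ℕ}

lemma avoids123_and_avoids132_iff (π : Perm (Fin n)) :
    Avoids123 π ∧ Avoids132 π ↔ ∀ i, #{j | i < j ∧ π i < π j} ≤ 1 := by
  refine ⟨fun ⟨h123, h132⟩ i => ?_, fun h => ⟨?_, ?_⟩⟩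
  · by_contra! hcard
    obtain ⟨a, ha, b, hb, hab⟩ := one_lt_card.1 hcard
    simp only [mem_filter, mem_univ, true_and] at ha hb
    wlog hlt : a < b generalizing a b
    · exact this b a hab.symm hb ha (hab.lt_or_gt.resolve_left hlt)
    rcases (π.injective.ne hab).lt_or_gt with hπ | hπ
    · exact h123 ⟨i, a, b, ha.1, hlt, ha.2, hπ⟩
    · exact h132 ⟨i, a, b, ha.1, hlt, hb.2, hπ⟩
  all_goals
    rintro ⟨i, j, k, hij, hjk, h₁, h₂⟩
    refine (h i).not_gt (one_lt_card.2 ⟨j, ?_, k, ?_, hjk.ne⟩) <;>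
      simp only [mem_filter, mem_univ, true_and] <;>
      exact ⟨by order, by order⟩

lemma avoids123_and_avoids132_iff_le_invTable (π : Perm (Fin n)) :
    Avoids123 π ∧ Avoids132 π ↔ ∀ i : Fin n, n - 1 - i ≤ invTable π i + 1 := by
  rw [avoids123_and_avoids132_iff]
  refine forall_congr' fun i => ?_
  have := invTable_add_card_filter_lt π i
  omega

end Avoidance

lemma le_val_apply_of_forall_lt {n j : ℕ} (π : Perm (Fin n))
    (h : ∀ i : Fin n, (i : ℕ) < j → (π i : ℕ) < j) {i : Fin n} (hi : j ≤ i) : j ≤ π i := by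
  set s : Set (Fin n) := {i | (i : ℕ) < j}
  have hbij : Set.BijOn π s s := (s.toFinite.injOn_iff_bijOn_of_mapsTo h).1 π.injective.injOn
  by_contra! hπi
  obtain ⟨i', hi', hπ⟩ := hbij.surjOn (show π i ∈ s from hπi)
  exact (π.injective hπ ▸ hi').not_ge hi

section Decomposition

variable {m : ℕ} {π : Perm (Fin (m + 1))}

lemma decomposable_of_apply_last (hm : 0 < m) (h : π (Fin.last m) = Fin.last m) :
    Decomposable π :=
  ⟨m, hm, m.lt_add_one, fun _ hi => Fin.val_lt_last fun hπi =>
    hi.ne (congrArg Fin.val (π.injective (hπi.trans h.symm)))⟩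

lemma apply_last_of_decomposable (hπ : ∀ i, #{j | i < j ∧ π i < π j} ≤ 1)
    (h : Decomposable π) : π (Fin.last m) = Fin.last m := by
  obtain ⟨j, hj0, hjm, hmaps⟩ := h
  -- every entry from position `j` on exceeds the one at `j - 1`, so there is only one of them
  set i₀ : Fin (m + 1) := ⟨j - 1, by omega⟩
  have hsub : Ici (⟨j, hjm⟩ : Fin (m + 1)) ⊆ ({i | i₀ < i ∧ π i₀ < π i} : Finset _) := by
    intro i hi
    have h₁ : (π i₀ : ℕ) < j := hmaps i₀ (by simp only [i₀]; omega)
    have hji : j ≤ (i : ℕ) := Fin.le_def.1 (mem_Ici.1 hi)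
    have h₂ := le_val_apply_of_forall_lt π hmaps hji
    have h₃ : (i₀ : ℕ) = j - 1 := rfl
    simp only [mem_filter, mem_univ, true_and, Fin.lt_def]
    omega
  have hcard := (card_le_card hsub).trans (hπ i₀)
  rw [Fin.card_Ici, Fin.val_mk] at hcard
  have hlast := le_val_apply_of_forall_lt π hmaps (i := Fin.last m) (by rw [Fin.val_last]; omega)
  refine le_antisymm (Fin.le_last _) ?_
  rw [Fin.le_def, Fin.val_last]
  omega

lemma invTable_eq_of_apply_eq_last {i : Fin (m + 1)} (h : π i = Fin.last m) :
    invTable π i = m - i := by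
  have := invTable_add_card_filter_lt π i
  rw [filter_eq_empty_iff.2 fun j _ hj => (h ▸ hj.2).not_ge (Fin.le_last _), card_empty] at this
  omega

lemma invTable_lt_of_apply_eq_last {i j : Fin (m + 1)} (hij : i < j) (h : π j = Fin.last m) :
    invTable π i < m - i := by
  have hj : j ∈ ({j | i < j ∧ π i < π j} : Finset _) := by
    simp only [mem_filter, mem_univ, true_and, h, Fin.lt_last_iff_ne_last]
    exact ⟨hij, fun hi => hij.ne (π.injective (hi.trans h.symm))⟩
  have := invTable_add_card_filter_lt π i
  have := card_pos.2 ⟨j, hj⟩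
  omega

lemma apply_last_eq_last_iff :
    π (Fin.last m) = Fin.last m ↔ ∀ i : Fin m, invTable π i.castSucc < m - i := by
  refine ⟨fun h i => invTable_lt_of_apply_eq_last (Fin.castSucc_lt_last i) h, fun h => ?_⟩
  rcases Fin.eq_castSucc_or_eq_last (π.symm (Fin.last m)) with ⟨i, hi⟩ | hi
  · have := invTable_eq_of_apply_eq_last (i := i.castSucc) (by rw [← hi, apply_symm_apply])
    exact absurd (h i) (by rw [this, Fin.val_castSucc]; exact lt_irrefl _)
  · simpa only [hi] using π.apply_symm_apply (Fin.last m)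

lemma indecomposable_iff_exists_invTable (hπ : ∀ i, #{j | i < j ∧ π i < π j} ≤ 1) :
    Indecomposable π ↔ (0 < m → ∃ i : Fin m, m - i ≤ invTable π i.castSucc) := by
  rcases m.eq_zero_or_pos with rfl | hm
  · exact iff_of_true ⟨Nat.zero_lt_one, fun ⟨j, hj0, hj1, _⟩ => by omega⟩ (absurd · (lt_irrefl 0))
  simp only [Indecomposable, m.succ_pos, hm, true_and, true_imp_iff]
  rw [← not_iff_not, not_not, not_exists]
  simp only [not_le]
  exact ⟨fun h => apply_last_eq_last_iff.1 (apply_last_of_decomposable hπ h),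
    fun h => decomposable_of_apply_last hm (apply_last_eq_last_iff.2 h)⟩

end Decomposition

lemma almostTriangular_ofFn_iff {r k : ℕ} (f : Fin r → ℕ) :
    AlmostTriangular k (List.ofFn f) ↔
      (∀ p, f p = p ∨ f p = p + 1) ∧ (0 < r → ∃ p, f p = p + 1) ∧ ∑ p, f p = k := by
  have hget : ∀ p : Fin r, f p = (List.ofFn f).getD p 0 := fun p => by
    rw [List.getD_eq_getElem _ _ (by simp), List.getElem_ofFn]
  simp only [AlmostTriangular, Fin.forall_iff, Fin.exists_iff, hget, List.length_ofFn,
    List.sum_ofFn, Ne, List.ofFn_eq_nil_iff, Nat.pos_iff_ne_zero, exists_prop]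

lemma mul_sub_one_div_two_add_self (r : ℕ) : r * (r - 1) / 2 + r = r * (r + 1) / 2 := by
  rw [← Nat.triangle_succ, Nat.add_sub_cancel, mul_comm]

lemma eq_of_triangle_bounds {k r r' : ℕ} (h : r * (r - 1) / 2 < k) (h' : k ≤ r * (r + 1) / 2)
    (g : r' * (r' - 1) / 2 < k) (g' : k ≤ r' * (r' + 1) / 2) : r = r' := by
  have mono {a b : ℕ} (hab : a < b) : a * (a + 1) / 2 ≤ b * (b - 1) / 2 :=
    Nat.div_le_div_right ((Nat.mul_le_mul (Nat.le_sub_one_of_lt hab) hab).trans_eq (mul_comm _ _))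
  rcases lt_trichotomy r r' with hr | hr | hr
  · have := mono hr; omega
  · exact hr
  · have := mono hr; omega

lemma exists_eq_ofFn {α : Type*} (l : List α) : ∃ r, ∃ f : Fin r → α, l = List.ofFn f :=
  ⟨_, _, List.ofFn_getElem.symm⟩

lemma setOf_almostTriangular_zero : {l | AlmostTriangular 0 l} = {[]} := by
  ext l
  obtain ⟨r, f, rfl⟩ := exists_eq_ofFn l
  simp only [Set.mem_ofPred_eq, Set.mem_singleton_iff, almostTriangular_ofFn_iff,
    List.ofFn_eq_nil_iff, sum_eq_zero_iff, mem_univ, true_imp_iff]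
  constructor
  · rintro ⟨-, hbump, hzero⟩
    by_contra hr
    obtain ⟨p, hp⟩ := hbump (Nat.pos_of_ne_zero hr)
    exact absurd (hzero p) (by omega)
  · rintro rfl
    exact ⟨fun p => p.elim0, fun h => absurd h (lt_irrefl 0), fun p => p.elim0⟩

def bumpList {r : ℕ} (s : Finset (Fin r)) : List ℕ :=
  List.ofFn fun p => p + if p ∈ s then 1 else 0

lemma bumpList_injective {r : ℕ} : Function.Injective (bumpList (r := r)) := fun s t h => by
  ext p
  have := congr_fun (List.ofFn_injective h) p
  by_cases hs : p ∈ s <;> by_cases ht : p ∈ t <;> simp_all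

lemma sum_val_add_ite_mem {r : ℕ} (s : Finset (Fin r)) :
    ∑ p : Fin r, ((p : ℕ) + if p ∈ s then 1 else 0) = r * (r - 1) / 2 + #s := by
  rw [sum_add_distrib, Fin.sum_univ_eq_sum_range (fun p => p), sum_range_id, sum_boole,
    filter_mem_eq_inter, univ_inter, Nat.cast_id]

lemma almostTriangular_bumpList_iff {r k : ℕ} (s : Finset (Fin r)) :
    AlmostTriangular k (bumpList s) ↔ (0 < r → s.Nonempty) ∧ r * (r - 1) / 2 + #s = k := by
  have hbump (p : Fin r) : ((p : ℕ) + if p ∈ s then 1 else 0) = p + 1 ↔ p ∈ s := by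
    split_ifs with hp <;> simp [hp]
  rw [bumpList, almostTriangular_ofFn_iff, sum_val_add_ite_mem,
    and_iff_right fun p => by split_ifs <;> simp]
  simp only [hbump, Finset.Nonempty]

lemma exists_eq_bumpList {k : ℕ} {l : List ℕ} (hl : AlmostTriangular k l) :
    ∃ r, ∃ s : Finset (Fin r), l = bumpList s := by
  obtain ⟨r, f, rfl⟩ := exists_eq_ofFn l
  refine ⟨r, ({p | f p = p + 1} : Finset _), congrArg List.ofFn (funext fun p => ?_)⟩
  rcases ((almostTriangular_ofFn_iff f).1 hl).1 p with hp | hp <;> simp [hp]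

lemma ncard_setOf_almostTriangular {k r : ℕ} (h₁ : r * (r - 1) / 2 < k)
    (h₂ : k ≤ r * (r + 1) / 2) :
    {l | AlmostTriangular k l}.ncard = r.choose (k - r * (r - 1) / 2) := by
  have hset : {l | AlmostTriangular k l} =
      (powersetCard (k - r * (r - 1) / 2) (univ : Finset (Fin r))).image bumpList := by
    ext l
    simp only [Set.mem_ofPred_eq, coe_image, Set.mem_image, mem_coe, mem_powersetCard_univ]
    constructor
    · intro hl
      obtain ⟨r', s, rfl⟩ := exists_eq_bumpList hl
      obtain ⟨hne, hsum⟩ := (almostTriangular_bumpList_iff s).1 hl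
      have hsr : #s ≤ r' := card_le_univ s |>.trans_eq (Fintype.card_fin r')
      have hr' : 0 < r' := Nat.pos_of_ne_zero fun hr => by
        subst hr
        rw [Nat.le_zero.1 hsr] at hsum
        omega
      have hs := (hne hr').card_pos
      have := mul_sub_one_div_two_add_self r'
      obtain rfl : r = r' := eq_of_triangle_bounds h₁ h₂ (by omega) (by omega)
      exact ⟨s, by omega, rfl⟩
    · rintro ⟨s, hs, rfl⟩
      exact (almostTriangular_bumpList_iff s).2 ⟨fun _ => card_pos.1 (by omega), by omega⟩
  rw [hset, Set.ncard_coe_finset, card_image_of_injective _ bumpList_injective,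
    card_powersetCard, card_univ, Fintype.card_fin]

/-- The inversion table read from right to left, without its last entry (which is always `0`):
for `π ∈ Av(123, 132)` this is the paper's `(ρ₁, …, ρᵣ)`. -/
def invTableRev {n : ℕ} (π : Perm (Fin n)) : List ℕ := (List.ofFn fun i => invTable π i.rev).tail

lemma invTableRev_eq_ofFn {m : ℕ} (π : Perm (Fin (m + 1))) :
    invTableRev π = List.ofFn fun p : Fin m => invTable π p.rev.castSucc := by
  simp [invTableRev, List.ofFn_succ, Fin.rev_succ]

lemma almostTriangular_invTableRev_iff {m k : ℕ} (π : Perm (Fin (m + 1))) :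
    AlmostTriangular k (invTableRev π) ↔
      Indecomposable π ∧ inversions π = k ∧ Avoids123 π ∧ Avoids132 π := by
  have hle (p : Fin m) : invTable π p.rev.castSucc ≤ p + 1 := by
    have := invTable_add_lt π p.rev.castSucc
    simp only [Fin.val_castSucc, Fin.val_rev] at this
    omega
  have hsum : ∑ p : Fin m, invTable π p.rev.castSucc = inversions π := by
    rw [inversions_eq_sum_invTable, Fin.sum_univ_castSucc, invTable_last, add_zero,
      ← Equiv.sum_comp Fin.revPerm fun i : Fin m => invTable π i.castSucc]
    rfl
  have hclass : Avoids123 π ∧ Avoids132 π ↔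
      ∀ p : Fin m, invTable π p.rev.castSucc = p ∨ invTable π p.rev.castSucc = p + 1 := by
    rw [avoids123_and_avoids132_iff_le_invTable, Fin.forall_fin_succ',
      ← Fin.revPerm.forall_congr_right]
    simp only [Fin.revPerm_apply, Fin.val_castSucc, Fin.val_rev, Fin.val_last,
      Nat.add_sub_cancel, Nat.sub_self, zero_le, and_true]
    exact forall_congr' fun p => by have := hle p; omega
  have hind (hav : Avoids123 π ∧ Avoids132 π) :
      Indecomposable π ↔ (0 < m → ∃ p : Fin m, invTable π p.rev.castSucc = p + 1) := by
    rw [indecomposable_iff_exists_invTable ((avoids123_and_avoids132_iff π).1 hav),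
      ← Fin.revPerm.exists_congr_right]
    refine imp_congr_right fun _ => exists_congr fun p => ?_
    have := hle p
    have := p.isLt
    simp only [Fin.revPerm_apply, Fin.val_rev]
    omega
  rw [invTableRev_eq_ofFn, almostTriangular_ofFn_iff, hsum, ← hclass]
  exact ⟨fun ⟨hav, hbump, hk⟩ => ⟨(hind hav).2 hbump, hk, hav⟩,
    fun ⟨hI, hk, hav⟩ => ⟨hav, (hind hav).1 hI, hk⟩⟩

lemma invTableRev_injective {n n' : ℕ} {π : Perm (Fin n)} {π' : Perm (Fin n')} (hn : 0 < n)
    (hn' : 0 < n') (h : invTableRev π = invTableRev π') :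
    (⟨n, π⟩ : Σ n, Perm (Fin n)) = ⟨n', π'⟩ := by
  obtain ⟨m, rfl⟩ := Nat.exists_eq_add_one_of_ne_zero hn.ne'
  obtain ⟨m', rfl⟩ := Nat.exists_eq_add_one_of_ne_zero hn'.ne'
  rw [invTableRev_eq_ofFn, invTableRev_eq_ofFn] at h
  obtain ⟨rfl, h⟩ := Sigma.mk.inj_iff.1 (List.ofFn_inj'.1 h)
  refine congrArg _ (invTable_injective (funext fun i => ?_))
  cases i using Fin.lastCases with
  | last => simp only [invTable_last]
  | cast i => simpa using congr_fun (eq_of_heq h) i.rev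

lemma exists_invTableRev_eq {r : ℕ} (f : Fin r → ℕ) (hf : ∀ p, f p ≤ p + 1) :
    ∃ π : Perm (Fin (r + 1)), invTableRev π = List.ofFn f := by
  obtain ⟨π, hπ⟩ := exists_invTable_eq (Fin.snoc (fun i => f i.rev) 0) fun i => by
    cases i using Fin.lastCases with
    | last => simp
    | cast i =>
      have := hf i.rev
      simp only [Fin.snoc_castSucc, Fin.val_castSucc, Fin.val_rev] at this ⊢
      omega
  exact ⟨π, by simp [invTableRev_eq_ofFn, hπ]⟩

theorem I123132_eq_ncard (k : ℕ) : I123132 k = {l | AlmostTriangular k l}.ncard := by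
  rw [I123132, ← Nat.card_coe_set_eq]
  refine Nat.card_congr (Equiv.ofBijective (fun q => ⟨invTableRev q.1.2, ?_⟩) ⟨?_, ?_⟩)
  · obtain ⟨⟨n, π⟩, hπ⟩ := q
    obtain ⟨m, rfl⟩ := Nat.exists_eq_add_one_of_ne_zero hπ.1.1.ne'
    exact (almostTriangular_invTableRev_iff π).2 hπ
  · rintro ⟨⟨n, π⟩, hπ⟩ ⟨⟨n', π'⟩, hπ'⟩ h
    exact Subtype.ext (invTableRev_injective hπ.1.1 hπ'.1.1 (congrArg Subtype.val h))
  · rintro ⟨l, hl⟩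
    obtain ⟨r, f, rfl⟩ := exists_eq_ofFn l
    have hf : ∀ p, f p ≤ p + 1 := fun p => by
      rcases ((almostTriangular_ofFn_iff f).1 hl).1 p with h | h <;> omega
    obtain ⟨π, hπ⟩ := exists_invTableRev_eq f hf
    exact ⟨⟨⟨r + 1, π⟩, (almostTriangular_invTableRev_iff π).1 (hπ ▸ hl)⟩, Subtype.ext hπ⟩

/-- `|I_k(132,123)|` equals the number of almost triangular partitions of `k`,
which is `C(r, k - r(r-1)/2)` where `r(r-1)/2 < k ≤ r(r+1)/2`, and is `1` for
`k = 0`. -/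
theorem card_indecomposable_avoids123_avoids132 :
    (∀ k : ℕ, I123132 k = {l : List ℕ | AlmostTriangular k l}.ncard) ∧
    I123132 0 = 1 ∧
    (∀ k r : ℕ, r * (r - 1) / 2 < k → k ≤ r * (r + 1) / 2 →
      I123132 k = r.choose (k - r * (r - 1) / 2)) := by
  refine ⟨I123132_eq_ncard, ?_, fun k r h₁ h₂ => ?_⟩
  · rw [I123132_eq_ncard, setOf_almostTriangular_zero, Set.ncard_singleton]
  · rw [I123132_eq_ncard, ncard_setOf_almostTriangular h₁ h₂]
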